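/- arXiv:2003.04740 — 3 statements merged into one kernel-verified Lean document; each statement's English description precedes it below -/
import Mathlib

section
/- There do not exist four circles in the plane that are pairwise orthogonal. -/
/-- There do not exist four pairwise orthogonal circles in the plane:
no centers `c i` and radii `r i > 0` (i = 0,…,3) satisfy
`r i ² + r j ² = dist (c i) (c j) ²` for all `i ≠ j`. -/
theorem no_four_pairwise_orthogonal_circles :
    ¬ ∃ (c : Fin 4 → EuclideanSpace ℝ (Fin 2)) (r : Fin 4 → ℝ),
        (∀ i, 0 < r i) ∧
        (∀ i j, i ≠ j → r i ^ 2 + r j ^ 2 = dist (c i) (c j) ^ 2) := by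
  rintro ⟨c, r, hr, h⟩
  have hd : ∀ i j : Fin 4, dist (c i) (c j) ^ 2
      = (c i 0 - c j 0) ^ 2 + (c i 1 - c j 1) ^ 2 := by
    intro i j
    rw [EuclideanSpace.dist_eq, Real.sq_sqrt (by positivity), Fin.sum_univ_two]
    simp [Real.dist_eq, sq_abs]
  have e01 := h 0 1 (by decide); rw [hd] at e01
  have e02 := h 0 2 (by decide); rw [hd] at e02
  have e03 := h 0 3 (by decide); rw [hd] at e03
  have e12 := h 1 2 (by decide); rw [hd] at e12
  have e13 := h 1 3 (by decide); rw [hd] at e13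
  have e23 := h 2 3 (by decide); rw [hd] at e23
  have hn1 : (c 1 0 - c 0 0) ^ 2 + (c 1 1 - c 0 1) ^ 2 = r 0 ^ 2 + r 1 ^ 2 := by
    linear_combination -e01
  have hn2 : (c 2 0 - c 0 0) ^ 2 + (c 2 1 - c 0 1) ^ 2 = r 0 ^ 2 + r 2 ^ 2 := by
    linear_combination -e02
  have hn3 : (c 3 0 - c 0 0) ^ 2 + (c 3 1 - c 0 1) ^ 2 = r 0 ^ 2 + r 3 ^ 2 := by
    linear_combination -e03
  have g12 : (c 1 0 - c 0 0) * (c 2 0 - c 0 0) + (c 1 1 - c 0 1) * (c 2 1 - c 0 1)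
      = r 0 ^ 2 := by linear_combination (e12 - e01 - e02) / 2
  have g13 : (c 1 0 - c 0 0) * (c 3 0 - c 0 0) + (c 1 1 - c 0 1) * (c 3 1 - c 0 1)
      = r 0 ^ 2 := by linear_combination (e13 - e01 - e03) / 2
  have g23 : (c 2 0 - c 0 0) * (c 3 0 - c 0 0) + (c 2 1 - c 0 1) * (c 3 1 - c 0 1)
      = r 0 ^ 2 := by linear_combination (e23 - e02 - e03) / 2
  -- Gram determinant of three vectors in ℝ² is zero
  have hdet : ((c 1 0 - c 0 0) ^ 2 + (c 1 1 - c 0 1) ^ 2)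
        * (((c 2 0 - c 0 0) ^ 2 + (c 2 1 - c 0 1) ^ 2)
            * ((c 3 0 - c 0 0) ^ 2 + (c 3 1 - c 0 1) ^ 2)
          - ((c 2 0 - c 0 0) * (c 3 0 - c 0 0) + (c 2 1 - c 0 1) * (c 3 1 - c 0 1)) ^ 2)
      - ((c 1 0 - c 0 0) * (c 2 0 - c 0 0) + (c 1 1 - c 0 1) * (c 2 1 - c 0 1))
        * (((c 1 0 - c 0 0) * (c 2 0 - c 0 0) + (c 1 1 - c 0 1) * (c 2 1 - c 0 1))
            * ((c 3 0 - c 0 0) ^ 2 + (c 3 1 - c 0 1) ^ 2)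
          - ((c 2 0 - c 0 0) * (c 3 0 - c 0 0) + (c 2 1 - c 0 1) * (c 3 1 - c 0 1))
            * ((c 1 0 - c 0 0) * (c 3 0 - c 0 0) + (c 1 1 - c 0 1) * (c 3 1 - c 0 1)))
      + ((c 1 0 - c 0 0) * (c 3 0 - c 0 0) + (c 1 1 - c 0 1) * (c 3 1 - c 0 1))
        * (((c 1 0 - c 0 0) * (c 2 0 - c 0 0) + (c 1 1 - c 0 1) * (c 2 1 - c 0 1))
            * ((c 2 0 - c 0 0) * (c 3 0 - c 0 0) + (c 2 1 - c 0 1) * (c 3 1 - c 0 1))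
          - ((c 2 0 - c 0 0) ^ 2 + (c 2 1 - c 0 1) ^ 2)
            * ((c 1 0 - c 0 0) * (c 3 0 - c 0 0) + (c 1 1 - c 0 1) * (c 3 1 - c 0 1)))
      = 0 := by ring
  rw [hn1, hn2, hn3, g12, g13, g23] at hdet
  nlinarith [hdet, pow_pos (hr 0) 2, pow_pos (hr 1) 2, pow_pos (hr 2) 2, pow_pos (hr 3) 2,
    mul_pos (mul_pos (pow_pos (hr 1) 2) (pow_pos (hr 2) 2)) (pow_pos (hr 3) 2),
    mul_pos (pow_pos (hr 0) 2) (mul_pos (pow_pos (hr 1) 2) (pow_pos (hr 2) 2)),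
    mul_pos (pow_pos (hr 0) 2) (mul_pos (pow_pos (hr 1) 2) (pow_pos (hr 3) 2)),
    mul_pos (pow_pos (hr 0) 2) (mul_pos (pow_pos (hr 2) 2) (pow_pos (hr 3) 2))]
end

section
/- Let α_i (i = 0,1,2) be circles of radius r_A = 1 centered at (d_A cos(π/6 + 2πi/3), d_A sin(π/6 + 2πi/3)) with d_A = √(2/3), and β_j (j = 0,1,2) be circles of radius r_B = √((70 + 40√3)/6) centered at (d_B cos(π/2 + 2π(j+1)/3), d_B sin(π/2 + 2π(j+1)/3)) with d_B = √(1/6) + √((73 + 40√3)/6). Then for i ≠ j, dist(c_{α_i}, c_{β_j})² = r_A² + r_B², so α_i and β_j are orthogonal. -/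
open Real

lemma dist_sq_polar (a b θ φ : ℝ) :
    dist ((WithLp.equiv 2 (Fin 2 → ℝ)).symm ![a * Real.cos θ, a * Real.sin θ])
      ((WithLp.equiv 2 (Fin 2 → ℝ)).symm ![b * Real.cos φ, b * Real.sin φ]) ^ 2
      = a ^ 2 + b ^ 2 - 2 * a * b * Real.cos (θ - φ) := by
  rw [EuclideanSpace.dist_eq, Real.sq_sqrt (by positivity)]
  simp [Fin.sum_univ_two, Real.dist_eq, sq_abs, Real.cos_sub]
  nlinarith [Real.sin_sq_add_cos_sq θ, Real.sin_sq_add_cos_sq φ]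

lemma numeric_key :
    Real.sqrt (2 / 3) ^ 2
      + (Real.sqrt (1 / 6) + Real.sqrt ((73 + 40 * Real.sqrt 3) / 6)) ^ 2
      - 2 * Real.sqrt (2 / 3) * (Real.sqrt (1 / 6) + Real.sqrt ((73 + 40 * Real.sqrt 3) / 6)) * (1 / 2)
      = 1 + Real.sqrt ((70 + 40 * Real.sqrt 3) / 6) ^ 2 := by
  have s3 : Real.sqrt 3 ^ 2 = 3 := Real.sq_sqrt (by norm_num)
  have s3n : 0 ≤ Real.sqrt 3 := Real.sqrt_nonneg 3
  have hA : Real.sqrt (2 / 3) ^ 2 = 2 / 3 := Real.sq_sqrt (by norm_num)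
  have hB : Real.sqrt (1 / 6) ^ 2 = 1 / 6 := Real.sq_sqrt (by norm_num)
  have hC : Real.sqrt ((73 + 40 * Real.sqrt 3) / 6) ^ 2 = (73 + 40 * Real.sqrt 3) / 6 :=
    Real.sq_sqrt (by positivity)
  have hD : Real.sqrt ((70 + 40 * Real.sqrt 3) / 6) ^ 2 = (70 + 40 * Real.sqrt 3) / 6 :=
    Real.sq_sqrt (by positivity)
  have h1 : Real.sqrt (2 / 3) * Real.sqrt (1 / 6) = 1 / 3 := by
    rw [← Real.sqrt_mul (by norm_num),
      show ((2:ℝ) / 3 * (1 / 6)) = (1 / 3) ^ 2 by norm_num, Real.sqrt_sq (by norm_num)]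
  have h2 : Real.sqrt (2 / 3) * Real.sqrt ((73 + 40 * Real.sqrt 3) / 6)
      = (5 + 4 * Real.sqrt 3) / 3 := by
    rw [← Real.sqrt_mul (by norm_num),
      show ((2:ℝ) / 3 * ((73 + 40 * Real.sqrt 3) / 6)) = ((5 + 4 * Real.sqrt 3) / 3) ^ 2 by
        nlinarith [s3], Real.sqrt_sq (by positivity)]
  have h3 : Real.sqrt (1 / 6) * Real.sqrt ((73 + 40 * Real.sqrt 3) / 6)
      = (5 + 4 * Real.sqrt 3) / 6 := by
    rw [← Real.sqrt_mul (by norm_num),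
      show ((1:ℝ) / 6 * ((73 + 40 * Real.sqrt 3) / 6)) = ((5 + 4 * Real.sqrt 3) / 6) ^ 2 by
        nlinarith [s3], Real.sqrt_sq (by positivity)]
  nlinarith [hA, hB, hC, hD, h1, h2, h3]

/-- With `α_i` of radius `r_A = 1` centered at distance `√(2/3)` from the origin at
angle `π/6 + 2πi/3`, and `β_j` of radius `r_B = √((70+40√3)/6)` centered at distance
`d_B = √(1/6) + √((73+40√3)/6)` at angle `π/2 + 2π(j+1)/3`, for `i ≠ j` the circles
`α_i` and `β_j` are orthogonal: `dist(c_{α_i}, c_{β_j})² = r_A² + r_B²`. -/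
theorem tile_A_B_circles_orthogonal :
    let dA : ℝ := Real.sqrt (2 / 3)
    let rA : ℝ := 1
    let rB : ℝ := Real.sqrt ((70 + 40 * Real.sqrt 3) / 6)
    let dB : ℝ := Real.sqrt (1 / 6) + Real.sqrt ((73 + 40 * Real.sqrt 3) / 6)
    let cA : Fin 3 → EuclideanSpace ℝ (Fin 2) := fun i =>
      (WithLp.equiv 2 (Fin 2 → ℝ)).symm
        ![dA * Real.cos (π / 6 + i * (2 * π / 3)),
          dA * Real.sin (π / 6 + i * (2 * π / 3))]
    let cB : Fin 3 → EuclideanSpace ℝ (Fin 2) := fun j =>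
      (WithLp.equiv 2 (Fin 2 → ℝ)).symm
        ![dB * Real.cos (π / 2 + (j + 1) * (2 * π / 3)),
          dB * Real.sin (π / 2 + (j + 1) * (2 * π / 3))]
    ∀ i j : Fin 3, i ≠ j → dist (cA i) (cB j) ^ 2 = rA ^ 2 + rB ^ 2 := by
  intro dA rA rB dB cA cB i j hij
  have key : ∀ θ φ : ℝ, Real.cos (θ - φ) = 1 / 2 →
      dist ((WithLp.equiv 2 (Fin 2 → ℝ)).symm ![dA * Real.cos θ, dA * Real.sin θ])
        ((WithLp.equiv 2 (Fin 2 → ℝ)).symm ![dB * Real.cos φ, dB * Real.sin φ]) ^ 2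
        = rA ^ 2 + rB ^ 2 := by
    intro θ φ h
    rw [dist_sq_polar, h]
    have := numeric_key
    simp only [dA, dB, rA, rB]
    linarith [numeric_key]
  have c1 : Real.cos (π / 3) = 1 / 2 := Real.cos_pi_div_three
  have cper : ∀ (x : ℝ) (n : ℤ), Real.cos (x + n * (2 * π)) = Real.cos x := fun x n =>
    Real.cos_add_int_mul_two_pi x n
  fin_cases i <;> fin_cases j <;> simp_all only [ne_eq, not_true_eq_false] <;>
    apply key <;> push_cast
  · rw [show (π / 6 + 0 * (2 * π / 3)) - (π / 2 + (1 + 1) * (2 * π / 3))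
      = π / 3 + (-1 : ℤ) * (2 * π) by push_cast; ring, cper, c1]
  · rw [show (π / 6 + 0 * (2 * π / 3)) - (π / 2 + (2 + 1) * (2 * π / 3))
      = -(π / 3) + (-1 : ℤ) * (2 * π) by push_cast; ring, cper, Real.cos_neg, c1]
  · rw [show (π / 6 + 1 * (2 * π / 3)) - (π / 2 + (0 + 1) * (2 * π / 3))
      = -(π / 3) by ring, Real.cos_neg, c1]
  · rw [show (π / 6 + 1 * (2 * π / 3)) - (π / 2 + (2 + 1) * (2 * π / 3))
      = π / 3 + (-1 : ℤ) * (2 * π) by push_cast; ring, cper, c1]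
  · rw [show (π / 6 + 2 * (2 * π / 3)) - (π / 2 + (0 + 1) * (2 * π / 3))
      = π / 3 by ring, c1]
  · rw [show (π / 6 + 2 * (2 * π / 3)) - (π / 2 + (1 + 1) * (2 * π / 3))
      = -(π / 3) by ring, Real.cos_neg, c1]
end

section
/- With the circles α_i and β_i as defined (r_A = 1, d_A = √(2/3), r_B = √((70+40√3)/6), d_B = √(1/6) + √((73+40√3)/6), centers as given), for each i ∈ {0,1,2} the circles α_i and β_i are disjoint: dist(c_{α_i}, c_{β_i}) > r_A + r_B. -/
open Real

/-- With the same circles `α_i` and `β_i` as in the lower-bound construction, for each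
`i` the circles `α_i` and `β_i` are disjoint: the distance between their centers
exceeds the sum `r_A + r_B` of their radii. -/
theorem tile_A_B_same_index_disjoint :
    let dA : ℝ := Real.sqrt (2 / 3)
    let rA : ℝ := 1
    let rB : ℝ := Real.sqrt ((70 + 40 * Real.sqrt 3) / 6)
    let dB : ℝ := Real.sqrt (1 / 6) + Real.sqrt ((73 + 40 * Real.sqrt 3) / 6)
    let cA : Fin 3 → EuclideanSpace ℝ (Fin 2) := fun i =>
      (WithLp.equiv 2 (Fin 2 → ℝ)).symm
        ![dA * Real.cos (π / 6 + i * (2 * π / 3)),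
          dA * Real.sin (π / 6 + i * (2 * π / 3))]
    let cB : Fin 3 → EuclideanSpace ℝ (Fin 2) := fun j =>
      (WithLp.equiv 2 (Fin 2 → ℝ)).symm
        ![dB * Real.cos (π / 2 + (j + 1) * (2 * π / 3)),
          dB * Real.sin (π / 2 + (j + 1) * (2 * π / 3))]
    ∀ i : Fin 3, dist (cA i) (cB i) > rA + rB := by
  intro dA rA rB dB cA cB i
  have hs3 : Real.sqrt 3 ≥ 0 := Real.sqrt_nonneg 3
  have hs3sq : Real.sqrt 3 ^ 2 = 3 := Real.sq_sqrt (by norm_num)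
  have hs3u : Real.sqrt 3 ≤ 1.74 := by nlinarith
  have hs3l : Real.sqrt 3 ≥ 1.73 := by nlinarith
  -- the angle of β_i is exactly the angle of α_i plus π
  have hang : π / 2 + ((i : ℝ) + 1) * (2 * π / 3) = (π / 6 + (i : ℝ) * (2 * π / 3)) + π := by
    ring
  set θ : ℝ := π / 6 + (i : ℝ) * (2 * π / 3) with hθ
  have hdBnn : 0 ≤ dB := by positivity
  have hdAnn : 0 ≤ dA := Real.sqrt_nonneg _
  have hdist : dist (cA i) (cB i) = dA + dB := by
    rw [EuclideanSpace.dist_eq]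
    simp only [Real.dist_eq, sq_abs]
    have h0 : ∀ k : Fin 2, (cA i) k - (cB i) k =
        (dA + dB) * (![Real.cos θ, Real.sin θ] k) := by
      intro k
      fin_cases k <;>
        simp [cA, cB, hang, Real.cos_add_pi, Real.sin_add_pi, ← hθ] <;> ring
    calc Real.sqrt (∑ k, ((cA i) k - (cB i) k) ^ 2)
        = Real.sqrt (∑ k : Fin 2, ((dA + dB) * (![Real.cos θ, Real.sin θ] k)) ^ 2) := by
          congr 1; exact Finset.sum_congr rfl fun k _ => by rw [h0 k]
      _ = Real.sqrt ((dA + dB) ^ 2) := by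
          rw [Fin.sum_univ_two]
          congr 1
          simp only [Matrix.cons_val_zero, Matrix.cons_val_one, Matrix.head_cons]
          nlinarith [Real.sin_sq_add_cos_sq θ]
      _ = dA + dB := Real.sqrt_sq (by positivity)
  rw [hdist]
  -- numeric bounds
  have ha : Real.sqrt (2 / 3) ≥ 0.81 := by
    nlinarith [Real.sq_sqrt (show (0:ℝ) ≤ 2/3 by norm_num), Real.sqrt_nonneg (2/3 : ℝ)]
  have hb : Real.sqrt (1 / 6) ≥ 0.40 := by
    nlinarith [Real.sq_sqrt (show (0:ℝ) ≤ 1/6 by norm_num), Real.sqrt_nonneg (1/6 : ℝ)]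
  have hc : Real.sqrt ((73 + 40 * Real.sqrt 3) / 6) ≥ 4.86 := by
    nlinarith [Real.sq_sqrt (show (0:ℝ) ≤ (73 + 40 * Real.sqrt 3) / 6 by positivity),
      Real.sqrt_nonneg ((73 + 40 * Real.sqrt 3) / 6)]
  have hd : Real.sqrt ((70 + 40 * Real.sqrt 3) / 6) ≤ 4.83 := by
    nlinarith [Real.sq_sqrt (show (0:ℝ) ≤ (70 + 40 * Real.sqrt 3) / 6 by positivity),
      Real.sqrt_nonneg ((70 + 40 * Real.sqrt 3) / 6)]
  simp only [dA, dB, rA, rB]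
  linarith
end
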